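/- In the type (ii) algebra A, a subspace M ⊆ A closed under multiplication is a maximal subalgebra (i.e. M ≠ A and there is no multiplication-closed subspace strictly between M and A) if and only if M = span{a², a³} or M = span{a − a², a − a³}. Moreover both of these subspaces M satisfy x·m ∈ M for all x ∈ A and m ∈ M (they are left ideals), even though A is not nilpotent. -/

import Mathlib

/-- `lpow μ x k` is the left-normed power `x^(k+1)`; so `lpow μ x 0 = x`,
`lpow μ x 1 = x·x = x²`, `lpow μ x 2 = x·x² = x³`, etc. -/
def lpow {A : Type*} [AddCommGroup A] [Module ℂ A]
    (μ : A →ₗ[ℂ] A →ₗ[ℂ] A) (x : A) : ℕ → A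
  | 0 => x
  | n + 1 => μ x (lpow μ x n)
/-- The 3-dimensional cyclic Leibniz algebra of type (ii): A = ℂ³ with basis
a = e₀, a² = e₁, a³ = e₂ and multiplication u·v = u₀ • L_a(v), where
L_a(a) = a², L_a(a²) = a³, L_a(a³) = a³ (so a²·v = a³·v = 0). -/
noncomputable def mulII : (Fin 3 → ℂ) →ₗ[ℂ] (Fin 3 → ℂ) →ₗ[ℂ] (Fin 3 → ℂ) :=
  (LinearMap.proj 0).smulRight (Matrix.mulVecLin !![0,0,0;1,0,0;0,1,1])

noncomputable def a : Fin 3 → ℂ := ![1,0,0]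
noncomputable def a2 : Fin 3 → ℂ := ![0,1,0]
noncomputable def a3 : Fin 3 → ℂ := ![0,0,1]

/-!
Every product lies in `span {a², a³}` (the kernel of the first coordinate), and left
multiplication by `u` preserves `span {a - a², a - a³}` (the kernel of the coordinate sum).
Conversely, if a subalgebra contains an element `m` lying in neither kernel, then `m`,
`m·m` and `m·(m·m) = m₀²(m₀ + m₁ + m₂) a³` span `A`. Since a subspace contained in the union
of two subspaces lies in one of them, every proper subalgebra lies in one of the two kernels,
and these two incomparable proper subalgebras are then exactly the maximal ones.
Finally `a` is not nilpotent because left multiplication by `a` fixes `a³ = a·(a·a)`.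
-/

section Maximal

variable {α : Type*} [PartialOrder α] [OrderTop α] {S : α → Prop} {p q : α}

theorem maximal_iff_eq_or_eq_of_le_or_le (hp : S p) (hq : S q) (hp_top : p ≠ ⊤)
    (hq_top : q ≠ ⊤) (hpq : ¬p ≤ q) (hqp : ¬q ≤ p)
    (hle : ∀ x, S x → x ≠ ⊤ → x ≤ p ∨ x ≤ q) {x : α} (hx : S x) :
    (x ≠ ⊤ ∧ ¬∃ y, S y ∧ x < y ∧ y < ⊤) ↔ x = p ∨ x = q := by
  constructor
  · rintro ⟨hx_top, hmax⟩
    have eq_of_le : ∀ r, S r → r ≠ ⊤ → x ≤ r → x = r := fun r hr hr_top hxr =>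
      hxr.eq_of_not_lt fun hxr' => hmax ⟨r, hr, hxr', hr_top.lt_top⟩
    exact (hle x hx hx_top).imp (eq_of_le p hp hp_top) (eq_of_le q hq hq_top)
  · rintro (rfl | rfl)
    · refine ⟨hp_top, fun ⟨y, hy, hxy, hy_top⟩ => ?_⟩
      rcases hle y hy hy_top.ne with h | h
      exacts [hxy.not_ge h, hpq (hxy.le.trans h)]
    · refine ⟨hq_top, fun ⟨y, hy, hxy, hy_top⟩ => ?_⟩
      rcases hle y hy hy_top.ne with h | h
      exacts [hqp (hxy.le.trans h), hxy.not_ge h]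

end Maximal

-- `{a2, a3}` would parse as structure-instance notation on the right of `notation`.
local notation "𝔪₁" => Submodule.span ℂ (insert a2 (singleton a3) : Set (Fin 3 → ℂ))
local notation "𝔪₂" => Submodule.span ℂ (insert (a - a2) (singleton (a - a3)) : Set (Fin 3 → ℂ))

theorem mulII_apply (u v : Fin 3 → ℂ) : mulII u v = u 0 • ![0, v 0, v 1 + v 2] := by
  ext i
  fin_cases i <;>
    simp [mulII, Matrix.mulVecLin, dotProduct, Fin.sum_univ_three]

theorem mulII_a_a : mulII a a = a2 := by
  ext i; fin_cases i <;> simp [mulII_apply, a, a2]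

theorem mulII_a_a2 : mulII a a2 = a3 := by
  ext i; fin_cases i <;> simp [mulII_apply, a, a2, a3]

theorem mulII_a_a3 : mulII a a3 = a3 := by
  ext i; fin_cases i <;> simp [mulII_apply, a, a3]

theorem eq_smul_a_add_smul_a2_add_smul_a3 (v : Fin 3 → ℂ) :
    v = v 0 • a + v 1 • a2 + v 2 • a3 := by
  ext i; fin_cases i <;> simp [a, a2, a3]

theorem mem_span_a2_a3 {v : Fin 3 → ℂ} : v ∈ 𝔪₁ ↔ v 0 = 0 := by
  rw [Submodule.mem_span_pair]
  constructor
  · rintro ⟨s, t, rfl⟩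
    simp [a2, a3]
  · intro hv
    exact ⟨v 1, v 2, by ext i; fin_cases i <;> simp [a2, a3, hv]⟩

theorem mem_span_a_sub_a2_a_sub_a3 {v : Fin 3 → ℂ} : v ∈ 𝔪₂ ↔ v 0 + v 1 + v 2 = 0 := by
  rw [Submodule.mem_span_pair]
  constructor
  · rintro ⟨s, t, rfl⟩
    simp [a, a2, a3]
  · intro hv
    refine ⟨-v 1, -v 2, ?_⟩
    ext i; fin_cases i <;> simp [a, a2, a3]; linear_combination -hv

theorem mulII_mem_span_a2_a3 (u v : Fin 3 → ℂ) : mulII u v ∈ 𝔪₁ := by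
  simp [mem_span_a2_a3, mulII_apply]

theorem mulII_mem_span_a_sub_a2_a_sub_a3 (u : Fin 3 → ℂ) {v : Fin 3 → ℂ} (hv : v ∈ 𝔪₂) :
    mulII u v ∈ 𝔪₂ := by
  rw [mem_span_a_sub_a2_a_sub_a3] at hv ⊢
  simp only [mulII_apply, Pi.smul_apply, Matrix.cons_val_zero, Matrix.cons_val_one,
    Matrix.cons_val_two, Matrix.head_cons, Matrix.tail_cons, smul_eq_mul]
  linear_combination u 0 * hv

theorem span_a2_a3_ne_top : 𝔪₁ ≠ ⊤ := fun h => by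
  have ha : a ∈ 𝔪₁ := h ▸ Submodule.mem_top
  simp [mem_span_a2_a3, a] at ha

theorem span_a_sub_a2_a_sub_a3_ne_top : 𝔪₂ ≠ ⊤ := fun h => by
  have ha : a ∈ 𝔪₂ := h ▸ Submodule.mem_top
  rw [mem_span_a_sub_a2_a_sub_a3] at ha
  simp [a] at ha

theorem span_a2_a3_not_le : ¬𝔪₁ ≤ 𝔪₂ := fun h => by
  have ha2 := h (Submodule.subset_span (Set.mem_insert a2 _))
  rw [mem_span_a_sub_a2_a_sub_a3] at ha2
  simp [a2] at ha2

theorem span_a_sub_a2_a_sub_a3_not_le : ¬𝔪₂ ≤ 𝔪₁ := fun h => by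
  have ha := h (Submodule.subset_span (Set.mem_insert (a - a2) _))
  rw [mem_span_a2_a3] at ha
  simp [a, a2] at ha

theorem eq_top_of_mem_of_apply_zero_ne_zero {M : Submodule ℂ (Fin 3 → ℂ)}
    (hM : ∀ u ∈ M, ∀ v ∈ M, mulII u v ∈ M) {m : Fin 3 → ℂ} (hm : m ∈ M)
    (h0 : m 0 ≠ 0) (hs : m 0 + m 1 + m 2 ≠ 0) : M = ⊤ := by
  have hmm : mulII m m ∈ M := hM m hm m hm
  have ha3 : a3 ∈ M := by
    have hmmm : mulII m (mulII m m) = (m 0 ^ 2 * (m 0 + m 1 + m 2)) • a3 := by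
      ext i; fin_cases i <;> simp [mulII_apply, a3]; ring
    rw [← M.smul_mem_iff (mul_ne_zero (pow_ne_zero 2 h0) hs), ← hmmm]
    exact hM m hm _ hmm
  have ha2 : a2 ∈ M := by
    have hsq : (m 0 ^ 2) • a2 = mulII m m - (m 0 * (m 1 + m 2)) • a3 := by
      ext i; fin_cases i <;> simp [mulII_apply, a2, a3]; ring
    rw [← M.smul_mem_iff (pow_ne_zero 2 h0), hsq]
    exact M.sub_mem hmm (M.smul_mem _ ha3)
  have ha : a ∈ M := by
    have hm' : m 0 • a = m - m 1 • a2 - m 2 • a3 := by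
      rw [sub_sub, eq_sub_iff_add_eq, ← add_assoc]
      exact (eq_smul_a_add_smul_a2_add_smul_a3 m).symm
    rw [← M.smul_mem_iff h0, hm']
    exact M.sub_mem (M.sub_mem hm (M.smul_mem _ ha2)) (M.smul_mem _ ha3)
  refine eq_top_iff.mpr fun v _ => ?_
  rw [eq_smul_a_add_smul_a2_add_smul_a3 v]
  exact M.add_mem (M.add_mem (M.smul_mem _ ha) (M.smul_mem _ ha2)) (M.smul_mem _ ha3)

theorem le_span_a2_a3_or_le_span_a_sub_a2_a_sub_a3 {M : Submodule ℂ (Fin 3 → ℂ)}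
    (hM : ∀ u ∈ M, ∀ v ∈ M, mulII u v ∈ M) (hM_top : M ≠ ⊤) : M ≤ 𝔪₁ ∨ M ≤ 𝔪₂ := by
  rw [← AddSubgroupClass.subset_union]
  intro m hm
  by_contra hm'
  simp only [Set.mem_union, SetLike.mem_coe, mem_span_a2_a3, mem_span_a_sub_a2_a_sub_a3,
    not_or] at hm'
  exact hM_top (eq_top_of_mem_of_apply_zero_ne_zero hM hm hm'.1 hm'.2)

theorem mulII_a_pow_add_two_apply_a (k : ℕ) : (mulII a ^ (k + 2)) a = a3 := by
  rw [pow_add, Module.End.mul_apply, sq, Module.End.mul_apply, mulII_a_a, mulII_a_a2,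
    Module.End.pow_apply]
  exact Function.iterate_fixed mulII_a_a3 k

/-- In the type (ii) algebra, a multiplication-closed subspace M is a
maximal subalgebra iff M = span{a², a³} or M = span{a − a², a − a³}; both of these
are left ideals, even though A is not nilpotent. -/
theorem typeII_maximal_subalgebras :
    (∀ M : Submodule ℂ (Fin 3 → ℂ), (∀ u ∈ M, ∀ v ∈ M, mulII u v ∈ M) →
      ((M ≠ ⊤ ∧
          ¬ ∃ N : Submodule ℂ (Fin 3 → ℂ),
              (∀ u ∈ N, ∀ v ∈ N, mulII u v ∈ N) ∧ M < N ∧ N < ⊤) ↔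
        (M = Submodule.span ℂ ({a2, a3} : Set (Fin 3 → ℂ)) ∨
          M = Submodule.span ℂ ({a - a2, a - a3} : Set (Fin 3 → ℂ))))) ∧
    (∀ x : Fin 3 → ℂ, ∀ m ∈ Submodule.span ℂ ({a2, a3} : Set (Fin 3 → ℂ)),
        mulII x m ∈ Submodule.span ℂ ({a2, a3} : Set (Fin 3 → ℂ))) ∧
    (∀ x : Fin 3 → ℂ, ∀ m ∈ Submodule.span ℂ ({a - a2, a - a3} : Set (Fin 3 → ℂ)),
        mulII x m ∈ Submodule.span ℂ ({a - a2, a - a3} : Set (Fin 3 → ℂ))) ∧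
    (∀ k : ℕ, (mulII a ^ k) a ≠ 0) := by
  refine ⟨fun M hM => ?_, fun x m _ => mulII_mem_span_a2_a3 x m,
    fun x m hm => mulII_mem_span_a_sub_a2_a_sub_a3 x hm, ?_⟩
  · refine maximal_iff_eq_or_eq_of_le_or_le (S := fun N => ∀ u ∈ N, ∀ v ∈ N, mulII u v ∈ N)
      (fun u _ v _ => mulII_mem_span_a2_a3 u v)
      (fun u _ _ hv => mulII_mem_span_a_sub_a2_a_sub_a3 u hv)
      span_a2_a3_ne_top span_a_sub_a2_a_sub_a3_ne_top
      span_a2_a3_not_le span_a_sub_a2_a_sub_a3_not_le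
      (fun _ => le_span_a2_a3_or_le_span_a_sub_a2_a_sub_a3) hM
  · rintro (_ | _ | k)
    · simp [a]
    · simp [mulII_a_a, a2]
    · simp [mulII_a_pow_add_two_apply_a, a3]
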